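/- arXiv:2405.20416 — 3 statements merged into one kernel-verified Lean document; each statement's English description precedes it below -/
import Mathlib

section
/- Given a family of pairwise-disjoint intervals (routing keys) at a fixed level of a B+ tree and a query interval [x,y], at most two of the intervals partially overlap [x,y] (i.e., intersect [x,y] but are not contained in it). -/
/-- Given a family of pairwise-disjoint intervals (routing keys) at a fixed level of a
B+ tree and a query interval `[x,y]`, at most two of the intervals partially overlap
`[x,y]` (i.e. intersect `[x,y]` but are not contained in it). -/
theorem at_most_two_partial_nodes {ι : Type*} (s : Finset ι) (L U : ι → ℤ) (x y : ℤ)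
    (hdisj : ∀ i ∈ s, ∀ j ∈ s, i ≠ j →
      Disjoint (Set.Icc (L i) (U i)) (Set.Icc (L j) (U j))) :
    Set.ncard {i ∈ (s : Set ι) |
      (Set.Icc (L i) (U i) ∩ Set.Icc x y).Nonempty ∧
      ¬ Set.Icc (L i) (U i) ⊆ Set.Icc x y} ≤ 2 := by
  set S : Set ι := {i ∈ (s : Set ι) |
      (Set.Icc (L i) (U i) ∩ Set.Icc x y).Nonempty ∧
      ¬ Set.Icc (L i) (U i) ⊆ Set.Icc x y} with hS
  -- every i ∈ S has x or y in its interval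
  have key : ∀ i ∈ S, x ∈ Set.Icc (L i) (U i) ∨ y ∈ Set.Icc (L i) (U i) := by
    rintro i ⟨his, ⟨z, hz1, hz2⟩, hnsub⟩
    simp only [Set.subset_def, not_forall] at hnsub
    obtain ⟨w, hw, hwxy⟩ := hnsub
    simp only [Set.mem_Icc, not_and_or, not_le] at *
    rcases hwxy with h | h
    · left; constructor <;> omega
    · right; constructor <;> omega
  classical
  let f : ι → ℤ := fun i => if x ∈ Set.Icc (L i) (U i) then x else y
  have hmaps : ∀ i ∈ S, f i ∈ ({x, y} : Set ℤ) := by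
    intro i hi
    by_cases h : x ∈ Set.Icc (L i) (U i)
    · simp only [f, if_pos h]; left; rfl
    · simp only [f, if_neg h]; right; rfl
  have hinj : Set.InjOn f S := by
    intro i hi j hj hfij
    by_contra hne
    have hd := hdisj i hi.1 j hj.1 hne
    have hmemf : ∀ k ∈ S, f k ∈ Set.Icc (L k) (U k) := by
      intro k hk
      by_cases h : x ∈ Set.Icc (L k) (U k)
      · simpa only [f, if_pos h] using h
      · have := (key k hk).resolve_left h
        simpa only [f, if_neg h] using this
    exact Set.not_disjoint_iff.2 ⟨f i, hmemf i hi, hfij ▸ hmemf j hj⟩ hd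
  have := Set.ncard_le_ncard_of_injOn f hmaps hinj ((Set.finite_singleton y).insert x)
  calc S.ncard ≤ ({x, y} : Set ℤ).ncard := this
    _ ≤ 2 := by
        have := Set.ncard_insert_le x ({y} : Set ℤ)
        simpa using this
end

section
/- At any iteration of the global classical search, the working list L contains at most two nodes, and all nodes in L are at the same level. -/
/-- At any iteration `n` of the global classical search, the working list `Ls n`
contains at most two nodes, and all nodes in `Ls n` are at the same level `n`.
The list starts with the root (a partial node at level 0); at each step every node is
replaced by its non-outside children; children are one level deeper; routing intervals
of distinct nodes at the same level are pairwise disjoint; and (since the search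
terminates before expanding a level containing an inside node) every node appearing in
any working list is not an inside node. -/
theorem working_list_invariant {ι : Type*} (level : ι → ℕ) (child : ι → ι → Prop)
    (L U : ι → ℤ) (x y : ℤ) (root : ι) (Ls : ℕ → Finset ι)
    (hrootlevel : level root = 0)
    (h0 : Ls 0 = {root})
    (hstep : ∀ n j, j ∈ Ls (n + 1) ↔
      ∃ i ∈ Ls n, child i j ∧ (Set.Icc (L j) (U j) ∩ Set.Icc x y).Nonempty)
    (hchildlevel : ∀ i j, child i j → level j = level i + 1)
    (hdisj : ∀ i j, level i = level j → i ≠ j →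
      Disjoint (Set.Icc (L i) (U i)) (Set.Icc (L j) (U j)))
    (hnotinside : ∀ n, ∀ i ∈ Ls n, ¬ Set.Icc (L i) (U i) ⊆ Set.Icc x y)
    (hrootnonoutside : (Set.Icc (L root) (U root) ∩ Set.Icc x y).Nonempty) :
    ∀ n, (Ls n).card ≤ 2 ∧ ∀ i ∈ Ls n, level i = n := by
  have hnon : ∀ n, ∀ i ∈ Ls n, (Set.Icc (L i) (U i) ∩ Set.Icc x y).Nonempty := by
    intro n i hi
    cases n with
    | zero =>
      rw [h0] at hi
      simp only [Finset.mem_singleton] at hi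
      subst hi; exact hrootnonoutside
    | succ m =>
      obtain ⟨j, _, _, hne⟩ := (hstep m i).1 hi
      exact hne
  have hlev : ∀ n, ∀ i ∈ Ls n, level i = n := by
    intro n
    induction n with
    | zero =>
      intro i hi
      rw [h0] at hi
      simp only [Finset.mem_singleton] at hi
      subst hi; exact hrootlevel
    | succ m ih =>
      intro i hi
      obtain ⟨j, hj, hc, _⟩ := (hstep m i).1 hi
      rw [hchildlevel j i hc, ih j hj]
  intro n
  refine ⟨?_, hlev n⟩
  -- every node in Ls n contains x or contains y
  have hxy : ∀ i ∈ Ls n, (L i < x ∧ x ∈ Set.Icc (L i) (U i)) ∨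
      (¬ L i < x ∧ y ∈ Set.Icc (L i) (U i)) := by
    intro i hi
    obtain ⟨p, hpi, hpxy⟩ := hnon n i hi
    simp only [Set.mem_Icc] at hpi hpxy
    have hns := hnotinside n i hi
    rw [Set.not_subset] at hns
    obtain ⟨r, hri, hrxy⟩ := hns
    simp only [Set.mem_Icc, not_and_or, not_le] at hri hrxy
    rcases hrxy with hr | hr
    · left
      have : L i < x := lt_of_le_of_lt hri.1 hr
      exact ⟨this, Set.mem_Icc.2 ⟨this.le, le_trans hpxy.1 hpi.2⟩⟩
    · by_cases hL : L i < x
      · exact Or.inl ⟨hL, Set.mem_Icc.2 ⟨hL.le, le_trans hpxy.1 hpi.2⟩⟩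
      · right
        exact ⟨hL, Set.mem_Icc.2 ⟨le_trans hpi.1 hpxy.2, le_trans hr.le hri.2⟩⟩
  have hinj : Set.InjOn (fun i => decide (L i < x)) (Ls n : Set ι) := by
    intro i hi j hj hf
    by_contra hne
    have hd := hdisj i j (by rw [hlev n i hi, hlev n j hj]) hne
    simp only [decide_eq_decide] at hf
    rcases hxy i hi with ⟨hLi, hxi⟩ | ⟨hLi, hyi⟩ <;>
      rcases hxy j hj with ⟨hLj, hxj⟩ | ⟨hLj, hyj⟩
    · exact Set.not_disjoint_iff.2 ⟨x, hxi, hxj⟩ hd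
    · exact hLj (hf.1 hLi)
    · exact hLi (hf.2 hLj)
    · exact Set.not_disjoint_iff.2 ⟨y, hyi, hyj⟩ hd
  calc (Ls n).card ≤ (Finset.univ : Finset Bool).card :=
        Finset.card_le_card_of_injOn _ (fun _ _ => Finset.mem_univ _) hinj
    _ = 2 := by simp
end

section
/- Suppose N key-record pairs are evenly distributed into ⌈N/B^h⌉·B^(h-1) leaves where h = ⌊log_B N⌋ and B ≥ 4. Then each leaf receives at least B/2 pairs (hence between B/2 and B pairs), so the resulting B+ tree is perfectly balanced. -/
private lemma even_dist_aux (B N d p c m w : ℕ)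
    (hB4 : 4 ≤ B) (hB2 : 2 ∣ B) (hp0 : 0 < p)
    (hd : d = p * B) (hdN : d ≤ N) (hNd : N < d * B)
    (hc : c = (N + d - 1) / d) (hm : m = c * p)
    (hw : w = N / m ∨ w = (N + m - 1) / m) :
    B / 2 ≤ w ∧ w ≤ B := by
  have hd0 : 0 < d := by rw [hd]; exact Nat.mul_pos hp0 (by omega)
  have hdm := Nat.div_add_mod (N + d - 1) d
  rw [← hc] at hdm
  have hmod : (N + d - 1) % d < d := Nat.mod_lt _ hd0
  have hcd1 : N ≤ d * c := by omega
  have hcd2 : d * c ≤ N + d - 1 := by omega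
  have hc1 : 1 ≤ c := by
    rw [hc, Nat.one_le_div_iff hd0]; omega
  have hm0 : 0 < m := by rw [hm]; exact Nat.mul_pos (by omega) hp0
  obtain ⟨k, hk⟩ := hB2
  have hk2 : B / 2 = k := by omega
  have hd' : d = 2 * (k * p) := by rw [hd, hk]; ring
  -- key lower bound
  have hkey : B / 2 * m ≤ N := by
    rw [hm, hk2]
    have hg : k * (c * p) = k * p * c := by ring
    rw [hg]
    rcases Nat.lt_or_ge N (d + 1) with hNe | hN2 
    · -- N = d, c = 1
      have hNe : N = d := by omega
      have hc1' : c = 1 := by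
        rw [hc, hNe]
        exact Nat.div_eq_of_lt_le (by omega) (by omega)
      rw [hc1']
      omega
    · -- c ≥ 2
      have hc2 : 2 ≤ c := by
        rw [hc, Nat.le_div_iff_mul_le hd0]; omega
      have h1 : k * p * 2 ≤ k * p * c := Nat.mul_le_mul_left _ hc2
      have h2 : d * c = 2 * (k * p * c) := by rw [hd, hk]; ring
      omega
  have hBm : B * m = d * c := by rw [hm, hd]; ring
  have hBm1 : (B + 1) * m = B * m + m := by ring
  rcases hw with rfl | rfl
  · constructor
    · rw [Nat.le_div_iff_mul_le hm0]; exact hkey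
    · have := (Nat.div_lt_iff_lt_mul hm0).mpr (by omega : N < (B + 1) * m)
      omega
  · constructor
    · have h1 : B / 2 ≤ N / m := by rw [Nat.le_div_iff_mul_le hm0]; exact hkey
      have h2 : N / m ≤ (N + m - 1) / m := Nat.div_le_div_right (by omega)
      omega
    · have := (Nat.div_lt_iff_lt_mul hm0).mpr (by omega : N + m - 1 < (B + 1) * m)
      omega

/-- Suppose `N` key-record pairs are evenly distributed into `m = ⌈N/B^h⌉·B^(h-1)` leaves,
where `h = ⌊log_B N⌋`, `B ≥ 4` is a power of 2 and `N ≥ B`.  Then each leaf (receiving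
either `⌊N/m⌋` or `⌈N/m⌉` pairs) receives at least `B/2` pairs, hence between `B/2` and `B`
pairs, so the resulting B+ tree is perfectly balanced. -/
theorem even_distribution_perfectly_balanced (B N w : ℕ)
    (hB4 : 4 ≤ B) (hBpow : ∃ n : ℕ, B = 2 ^ n) (hN : B ≤ N)
    (m : ℕ)
    (hm : m = ((N + B ^ Nat.log B N - 1) / B ^ Nat.log B N) * B ^ (Nat.log B N - 1))
    (hw : w = N / m ∨ w = (N + m - 1) / m) :
    B / 2 ≤ w ∧ w ≤ B := by
  obtain ⟨n, hn⟩ := hBpow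
  have hB2 : 2 ∣ B := by
    rcases n with _ | n
    · simp at hn; omega
    · exact hn ▸ dvd_pow_self 2 (Nat.succ_ne_zero n)
  have hB1 : 1 < B := by omega
  have hh1 : 1 ≤ Nat.log B N := Nat.log_pos hB1 hN
  have hpow : B ^ Nat.log B N = B ^ (Nat.log B N - 1) * B := by
    rw [← pow_succ]; congr 1; omega
  refine even_dist_aux B N (B ^ Nat.log B N) (B ^ (Nat.log B N - 1))
    ((N + B ^ Nat.log B N - 1) / B ^ Nat.log B N) m w hB4 hB2
    (Nat.pow_pos (by omega)) hpow
    (Nat.pow_log_le_self B (by omega)) ?_ rfl hm hw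
  calc N < B ^ (Nat.log B N + 1) := Nat.lt_pow_succ_log_self hB1 N
    _ = B ^ Nat.log B N * B := pow_succ B _
end
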